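/- For every n ≥ 1 and x ∈ [0,1], the ratio of the absolute third to the second central moment of the Kantorovich operator satisfies |K_n((t−x)^3;x)| / K_n((t−x)^2;x) ≤ 5/(2(n+1)). -/

import Mathlib

open MeasureTheory Set

noncomputable def kantorovich (n : ℕ) (f : ℝ → ℝ) (x : ℝ) : ℝ :=
  ((n : ℝ) + 1) * ∑ k ∈ Finset.range (n + 1),
    (n.choose k : ℝ) * x ^ k * (1 - x) ^ (n - k) *
      ∫ t in ((k : ℝ) / ((n : ℝ) + 1))..(((k : ℝ) + 1) / ((n : ℝ) + 1)), f t

noncomputable def supNorm (f : ℝ → ℝ) : ℝ :=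
  sSup {y | ∃ x ∈ Icc (0:ℝ) 1, y = |f x|}

noncomputable def omega1 (f : ℝ → ℝ) (h : ℝ) : ℝ :=
  sSup {d | ∃ s ∈ Icc (0:ℝ) 1, ∃ t ∈ Icc (0:ℝ) 1, |s - t| ≤ h ∧ d = |f s - f t|}

noncomputable def omega2 (f : ℝ → ℝ) (h : ℝ) : ℝ :=
  sSup {d | ∃ t δ : ℝ, 0 < δ ∧ δ ≤ h ∧ t - δ ∈ Icc (0:ℝ) 1 ∧ t + δ ∈ Icc (0:ℝ) 1 ∧
    d = |f (t + δ) - 2 * f t + f (t - δ)|}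

/-!
With `K ~ B(n, x)`, `K_n f (x)` is the mean of `(n + 1) ∫ f` over the cell
`[K/(n+1), (K+1)/(n+1)]`. For `f t = (t - x)^m` this cell integral is a polynomial of degree `m`
in `K`, so the central moments follow from the factorial moments
`E[K (K-1) ⋯ (K-j+1)] = n (n-1) ⋯ (n-j+1) x^j`. Writing `u = x (1 - x) ∈ [0, 1/4]` and using
`|1 - 2x| ≤ 1`, the closed forms give
`|K_n((t-x)^3)| ≤ ((10n - 2) u + 1) / (4 (n+1)^3) ≤ 5/(2(n+1)) · ((n-1) u + 1/3) / (n+1)^2`,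
the last step being `8u ≤ 7/3`.
-/

open Finset

noncomputable def bernsteinMean (n : ℕ) (x : ℝ) (g : ℕ → ℝ) : ℝ :=
  ∑ k ∈ range (n + 1), (n.choose k : ℝ) * x ^ k * (1 - x) ^ (n - k) * g k

lemma prod_range_succ_sub_natCast {R : Type*} [CommRing R] (y : R) (j : ℕ) :
    ∏ i ∈ range (j + 1), (y - i) = y * ∏ i ∈ range j, (y - 1 - i) := by
  rw [prod_range_succ', mul_comm]
  push_cast
  rw [sub_zero]
  exact congrArg (y * ·) (prod_congr rfl fun i _ => by ring)

section bernsteinMean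

variable (n : ℕ) (x : ℝ)

lemma bernsteinMean_add (g h : ℕ → ℝ) :
    bernsteinMean n x (fun k => g k + h k) = bernsteinMean n x g + bernsteinMean n x h := by
  simp only [bernsteinMean, mul_add, sum_add_distrib]

lemma bernsteinMean_const_mul (c : ℝ) (g : ℕ → ℝ) :
    bernsteinMean n x (fun k => c * g k) = c * bernsteinMean n x g := by
  simp only [bernsteinMean, mul_sum]
  exact sum_congr rfl fun k _ => by ring

lemma bernsteinMean_factorial_moment (j : ℕ) :
    bernsteinMean n x (fun k => ∏ i ∈ range j, ((k : ℝ) - i))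
      = (∏ i ∈ range j, ((n : ℝ) - i)) * x ^ j := by
  induction j generalizing n with
  | zero =>
    have binomial := (add_pow x (1 - x) n).symm
    rw [add_sub_cancel, one_pow] at binomial
    simp only [bernsteinMean, prod_range_zero, mul_one, pow_zero]
    exact (sum_congr rfl fun k _ => by ring).trans binomial
  | succ j ih =>
    cases n with
    | zero => simp only [bernsteinMean, prod_range_succ_sub_natCast]; simp
    | succ m =>
      have shift : ∀ k ∈ range (m + 1),
          ((m + 1).choose (k + 1) : ℝ) * x ^ (k + 1) * (1 - x) ^ (m + 1 - (k + 1)) *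
              ∏ i ∈ range (j + 1), (((k + 1 : ℕ) : ℝ) - i)
            = ((m : ℝ) + 1) * x *
              ((m.choose k : ℝ) * x ^ k * (1 - x) ^ (m - k) *
                ∏ i ∈ range j, ((k : ℝ) - i)) := by
        intro k _
        have choose_mul :
            ((m + 1).choose (k + 1) : ℝ) * ((k : ℝ) + 1) = ((m : ℝ) + 1) * m.choose k := by
          exact_mod_cast (Nat.add_one_mul_choose_eq m k).symm
        rw [prod_range_succ_sub_natCast, Nat.add_sub_add_right]
        push_cast
        simp only [add_sub_cancel_right]
        linear_combination
          x ^ (k + 1) * (1 - x) ^ (m - k) * (∏ i ∈ range j, ((k : ℝ) - i)) * choose_mul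
      rw [bernsteinMean, sum_range_succ', sum_congr rfl shift, ← mul_sum, ← bernsteinMean, ih,
        prod_range_succ_sub_natCast]
      push_cast
      simp only [add_sub_cancel_right, prod_range_succ_sub_natCast, zero_sub, zero_mul, mul_zero,
        add_zero]
      ring

lemma bernsteinMean_cubic (c₀ c₁ c₂ c₃ : ℝ) :
    bernsteinMean n x
        (fun k => c₀ + c₁ * k + c₂ * (k * (k - 1)) + c₃ * (k * (k - 1) * (k - 2)))
      = c₀ + c₁ * (n * x) + c₂ * (n * (n - 1) * x ^ 2)
          + c₃ * (n * (n - 1) * (n - 2) * x ^ 3) := by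
  have m₀ := bernsteinMean_factorial_moment n x 0
  have m₁ := bernsteinMean_factorial_moment n x 1
  have m₂ := bernsteinMean_factorial_moment n x 2
  have m₃ := bernsteinMean_factorial_moment n x 3
  simp only [prod_range_succ, prod_range_zero, Nat.cast_zero, Nat.cast_one, Nat.cast_ofNat,
    sub_zero, one_mul, pow_zero, pow_one] at m₀ m₁ m₂ m₃
  rw [← mul_one c₀, bernsteinMean_add, bernsteinMean_add, bernsteinMean_add,
    bernsteinMean_const_mul, bernsteinMean_const_mul, bernsteinMean_const_mul,
    bernsteinMean_const_mul, m₀, m₁, m₂, m₃]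

end bernsteinMean

lemma integral_sub_pow (a b x : ℝ) (m : ℕ) :
    ∫ t in a..b, (t - x) ^ m = ((b - x) ^ (m + 1) - (a - x) ^ (m + 1)) / (m + 1) := by
  simp [intervalIntegral.integral_comp_sub_right fun t => t ^ m, integral_pow]

lemma kantorovich_eq_bernsteinMean (n : ℕ) (f : ℝ → ℝ) (x : ℝ) :
    kantorovich n f x = bernsteinMean n x (fun k => ((n : ℝ) + 1) *
      ∫ t in ((k : ℝ) / ((n : ℝ) + 1))..(((k : ℝ) + 1) / ((n : ℝ) + 1)), f t) := by
  simp only [kantorovich, bernsteinMean, mul_sum]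
  exact sum_congr rfl fun k _ => by ring

lemma kantorovich_second_central_moment (n : ℕ) (x : ℝ) :
    kantorovich n (fun t => (t - x) ^ 2) x
      = (((n : ℝ) - 1) * x * (1 - x) + 1 / 3) / ((n : ℝ) + 1) ^ 2 := by
  have hN : (n : ℝ) + 1 ≠ 0 := by positivity
  have cell : (fun k : ℕ => ((n : ℝ) + 1) *
      ∫ t in ((k : ℝ) / ((n : ℝ) + 1))..(((k : ℝ) + 1) / ((n : ℝ) + 1)), (t - x) ^ 2)
      = fun k : ℕ => (x ^ 2 - x / ((n : ℝ) + 1) + 1 / (3 * ((n : ℝ) + 1) ^ 2))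
        + (2 / ((n : ℝ) + 1) ^ 2 - 2 * x / ((n : ℝ) + 1)) * k
        + 1 / ((n : ℝ) + 1) ^ 2 * (k * (k - 1)) + 0 * (k * (k - 1) * (k - 2)) := by
    funext k
    rw [integral_sub_pow]
    push_cast
    field_simp
    ring
  rw [kantorovich_eq_bernsteinMean, cell, bernsteinMean_cubic]
  field_simp
  ring

lemma kantorovich_third_central_moment (n : ℕ) (x : ℝ) :
    kantorovich n (fun t => (t - x) ^ 3) x
      = (1 - 2 * x) * (10 * (n : ℝ) * x * (1 - x) + 2 * x ^ 2 - 2 * x + 1) /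
          (4 * ((n : ℝ) + 1) ^ 3) := by
  have hN : (n : ℝ) + 1 ≠ 0 := by positivity
  have cell : (fun k : ℕ => ((n : ℝ) + 1) *
      ∫ t in ((k : ℝ) / ((n : ℝ) + 1))..(((k : ℝ) + 1) / ((n : ℝ) + 1)), (t - x) ^ 3)
      = fun k : ℕ => (-x ^ 3 + 3 * x ^ 2 / (2 * ((n : ℝ) + 1)) - x / ((n : ℝ) + 1) ^ 2
              + 1 / (4 * ((n : ℝ) + 1) ^ 3))
        + (7 / (2 * ((n : ℝ) + 1) ^ 3) - 6 * x / ((n : ℝ) + 1) ^ 2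
            + 3 * x ^ 2 / ((n : ℝ) + 1)) * k
        + (9 / (2 * ((n : ℝ) + 1) ^ 3) - 3 * x / ((n : ℝ) + 1) ^ 2) * (k * (k - 1))
        + 1 / ((n : ℝ) + 1) ^ 3 * (k * (k - 1) * (k - 2)) := by
    funext k
    rw [integral_sub_pow]
    push_cast
    field_simp
    ring
  rw [kantorovich_eq_bernsteinMean, cell, bernsteinMean_cubic]
  field_simp
  ring

lemma kantorovich_second_central_moment_pos (n : ℕ) {x : ℝ} (hx : x ∈ Icc (0 : ℝ) 1) :
    0 < kantorovich n (fun t => (t - x) ^ 2) x := by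
  have hu : x * (1 - x) ≤ 1 / 4 := by nlinarith [sq_nonneg (2 * x - 1)]
  rw [kantorovich_second_central_moment]
  apply div_pos _ (by positivity)
  nlinarith [mul_nonneg hx.1 (sub_nonneg.mpr hx.2)]

lemma abs_kantorovich_third_central_moment_le (n : ℕ) {x : ℝ} (hx : x ∈ Icc (0 : ℝ) 1) :
    |kantorovich n (fun t => (t - x) ^ 3) x|
      ≤ (10 * (n : ℝ) * x * (1 - x) + 2 * x ^ 2 - 2 * x + 1) / (4 * ((n : ℝ) + 1) ^ 3) := by
  have factor_nonneg : 0 ≤ 10 * (n : ℝ) * x * (1 - x) + 2 * x ^ 2 - 2 * x + 1 := by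
    nlinarith [mul_nonneg hx.1 (sub_nonneg.mpr hx.2), sq_nonneg (x - 1 / 2)]
  rw [kantorovich_third_central_moment, abs_div, abs_mul, abs_of_nonneg factor_nonneg,
    abs_of_pos (by positivity : (0 : ℝ) < 4 * ((n : ℝ) + 1) ^ 3)]
  gcongr
  exact mul_le_of_le_one_left factor_nonneg
    (abs_le.mpr ⟨by linarith [hx.2], by linarith [hx.1]⟩)

theorem kantorovich_third_to_second_moment_ratio_general (n : ℕ) (x : ℝ)
    (hx : x ∈ Icc (0:ℝ) 1) :
    |kantorovich n (fun t => (t - x) ^ 3) x| / kantorovich n (fun t => (t - x) ^ 2) x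
      ≤ 5 / (2 * ((n : ℝ) + 1)) := by
  have hu : x * (1 - x) ≤ 1 / 4 := by nlinarith [sq_nonneg (2 * x - 1)]
  rw [div_le_iff₀ (kantorovich_second_central_moment_pos n hx)]
  refine (abs_kantorovich_third_central_moment_le n hx).trans ?_
  rw [kantorovich_second_central_moment]
  field_simp
  nlinarith

theorem kantorovich_third_to_second_moment_ratio (n : ℕ) (hn : 1 ≤ n) (x : ℝ)
    (hx : x ∈ Icc (0:ℝ) 1) :
    |kantorovich n (fun t => (t - x) ^ 3) x| / kantorovich n (fun t => (t - x) ^ 2) x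
      ≤ 5 / (2 * ((n : ℝ) + 1)) :=
  kantorovich_third_to_second_moment_ratio_general n x hx
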